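/- arXiv:0705.1159 — 5 statements merged into one kernel-verified Lean document; each statement's English description precedes it below -/
import Mathlib

section
/- With the notation of the mixing construction: if π₁ is a stationary distribution of P₁ and π₂ is a stationary distribution of P₂, and 0 < μ₁₂, μ₂₁ < 1, then the vector π' = (α π₁, (1-α) π₂) with α = μ₂₁/(μ₁₂+μ₂₁) is a stationary distribution of the mixed matrix P' = [[(1-μ₁₂)P₁, μ₁₂P̄₂],[μ₂₁P̄₁, (1-μ₂₁)P₂]]. -/
open scoped BigOperators

/-- A matrix is row-stochastic if its entries are nonnegative and each row sums to 1. -/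
def RowStochastic {m n : Type*} [Fintype n] (M : Matrix m n ℝ) : Prop :=
  (∀ i j, 0 ≤ M i j) ∧ ∀ i, ∑ j, M i j = 1

/-- A probability vector has nonnegative entries summing to 1. -/
def ProbVec {n : Type*} [Fintype n] (π : n → ℝ) : Prop :=
  (∀ i, 0 ≤ π i) ∧ ∑ i, π i = 1

/-- `π` is a stationary distribution of the row-stochastic matrix `P`: `π P = π`. -/
def Stationary {n : Type*} [Fintype n] (π : n → ℝ) (P : Matrix n n ℝ) : Prop :=
  ProbVec π ∧ ∀ j, ∑ i, π i * P i j = π j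

/-! Each off-diagonal block has every row equal to the stationary law of the block it jumps
into, so on each block `π' P'` is a combination of `πᵢ Pᵢ = πᵢ` and `πᵢ` itself. The total
weight leaving block 1, `α μ₁₂`, equals the weight entering it, `(1 - α) μ₂₁`, which is exactly
how `α = μ₂₁ / (μ₁₂ + μ₂₁)` is chosen. -/

open Matrix

theorem stationary_iff_vecMul {n : Type*} [Fintype n] {π : n → ℝ} {P : Matrix n n ℝ} :
    Stationary π P ↔ ProbVec π ∧ π ᵥ* P = π := by
  simp only [Stationary, funext_iff]; rfl

theorem vecMul_of_const_rows {m n R : Type*} [Fintype m] [NonUnitalCommSemiring R]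
    (v : m → R) (w : n → R) : v ᵥ* of (fun _ j => w j) = (∑ i, v i) • w := by
  ext j
  simp [vecMul, dotProduct, Finset.sum_mul]

variable {m n : Type*} [Fintype m] [Fintype n]

theorem ProbVec.smul_sum {π : n → ℝ} (h : ProbVec π) (a : ℝ) : ∑ i, (a • π) i = a := by
  simp [← Finset.mul_sum, h.2]

theorem ProbVec.sumElim_smul {π₁ : m → ℝ} {π₂ : n → ℝ} (h₁ : ProbVec π₁) (h₂ : ProbVec π₂)
    {a b : ℝ} (ha : 0 ≤ a) (hb : 0 ≤ b) (hab : a + b = 1) :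
    ProbVec (Sum.elim (a • π₁) (b • π₂)) := by
  refine ⟨fun i => ?_, ?_⟩
  · rcases i with i | i
    · exact mul_nonneg ha (h₁.1 _)
    · exact mul_nonneg hb (h₂.1 _)
  · rw [Fintype.sum_sumElim, h₁.smul_sum, h₂.smul_sum, hab]

theorem Stationary.sumElim_smul_fromBlocks {π₁ : m → ℝ} {π₂ : n → ℝ} {P₁ : Matrix m m ℝ}
    {P₂ : Matrix n n ℝ} (h₁ : Stationary π₁ P₁) (h₂ : Stationary π₂ P₂)
    {a b μ₁₂ μ₂₁ : ℝ} (ha : 0 ≤ a) (hb : 0 ≤ b) (hab : a + b = 1)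
    (hbal : a * μ₁₂ = b * μ₂₁) :
    Stationary (Sum.elim (a • π₁) (b • π₂))
      (fromBlocks ((1 - μ₁₂) • P₁) (μ₁₂ • of fun (_ : m) (j : n) => π₂ j)
        (μ₂₁ • of fun (_ : n) (j : m) => π₁ j) ((1 - μ₂₁) • P₂)) := by
  obtain ⟨hπ₁, hP₁⟩ := stationary_iff_vecMul.1 h₁
  obtain ⟨hπ₂, hP₂⟩ := stationary_iff_vecMul.1 h₂
  refine stationary_iff_vecMul.2 ⟨hπ₁.sumElim_smul hπ₂ ha hb hab, ?_⟩
  simp only [vecMul_fromBlocks, Sum.elim_comp_inl, Sum.elim_comp_inr, vecMul_smul, smul_vecMul,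
    vecMul_of_const_rows, hP₁, hP₂, hπ₁.smul_sum, hπ₂.smul_sum]
  ext (j | j) <;> simp only [Sum.elim_inl, Sum.elim_inr, Pi.add_apply, Pi.smul_apply, smul_eq_mul]
  · linear_combination (-π₁ j) * hbal
  · linear_combination (π₂ j) * hbal

theorem mixed_matrix_stationary_general {k₁ k₂ : ℕ}
    (P₁ : Matrix (Fin k₁) (Fin k₁) ℝ) (P₂ : Matrix (Fin k₂) (Fin k₂) ℝ)
    (π₁ : Fin k₁ → ℝ) (π₂ : Fin k₂ → ℝ)
    (hπ₁ : Stationary π₁ P₁) (hπ₂ : Stationary π₂ P₂)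
    (μ₁₂ μ₂₁ : ℝ) (hμ₁₂ : 0 < μ₁₂) (hμ₂₁ : 0 < μ₂₁) :
    Stationary
      (Sum.elim (fun i => (μ₂₁ / (μ₁₂ + μ₂₁)) * π₁ i)
                (fun i => (1 - μ₂₁ / (μ₁₂ + μ₂₁)) * π₂ i))
      (Matrix.fromBlocks
        ((1 - μ₁₂) • P₁) (μ₁₂ • Matrix.of fun (_ : Fin k₁) (j : Fin k₂) => π₂ j)
        (μ₂₁ • Matrix.of fun (_ : Fin k₂) (j : Fin k₁) => π₁ j) ((1 - μ₂₁) • P₂)) := by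
  have hα : μ₂₁ / (μ₁₂ + μ₂₁) ≤ 1 := div_le_one_of_le₀ (by linarith) (by positivity)
  refine hπ₁.sumElim_smul_fromBlocks hπ₂ (by positivity) (sub_nonneg.mpr hα) (by ring) ?_
  field_simp
  ring

/-- `π' = (α π₁, (1-α) π₂)` with `α = μ₂₁/(μ₁₂+μ₂₁)` is a stationary
distribution of the mixed matrix `P'`. -/
theorem mixed_matrix_stationary {k₁ k₂ : ℕ}
    (P₁ : Matrix (Fin k₁) (Fin k₁) ℝ) (P₂ : Matrix (Fin k₂) (Fin k₂) ℝ)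
    (hP₁ : RowStochastic P₁) (hP₂ : RowStochastic P₂)
    (π₁ : Fin k₁ → ℝ) (π₂ : Fin k₂ → ℝ)
    (hπ₁ : Stationary π₁ P₁) (hπ₂ : Stationary π₂ P₂)
    (μ₁₂ μ₂₁ : ℝ) (hμ₁₂ : 0 < μ₁₂) (hμ₁₂' : μ₁₂ < 1) (hμ₂₁ : 0 < μ₂₁) (hμ₂₁' : μ₂₁ < 1) :
    Stationary
      (Sum.elim (fun i => (μ₂₁ / (μ₁₂ + μ₂₁)) * π₁ i)
                (fun i => (1 - μ₂₁ / (μ₁₂ + μ₂₁)) * π₂ i))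
      (Matrix.fromBlocks
        ((1 - μ₁₂) • P₁) (μ₁₂ • Matrix.of fun (_ : Fin k₁) (j : Fin k₂) => π₂ j)
        (μ₂₁ • Matrix.of fun (_ : Fin k₂) (j : Fin k₁) => π₁ j) ((1 - μ₂₁) • P₂)) :=
  mixed_matrix_stationary_general P₁ P₂ π₁ π₂ hπ₁ hπ₂ μ₁₂ μ₂₁ hμ₁₂ hμ₂₁
end

section
/- Let f and g be probability mass functions on a finite set, with g strictly positive on the support of f, and suppose ε⁻ g(y) ≤ f(y) ≤ ε⁺ g(y) for all y, where 0 < ε⁻ ≤ 1 ≤ ε⁺. Then the Shannon entropy H(f) = -Σ_y f(y) log f(y) satisfies H(f) ≤ ε⁺ H(g) - ε⁺ log ε⁻ and H(f) ≥ ε⁻ H(g) - ε⁻ log ε⁺. -/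
/-! Pointwise, `-f log f = f · (-log f)` with `-log f ≥ 0` because `f ≤ 1`; replacing the factor
`f` by `ε⁺ g` (resp. `ε⁻ g`) and `-log f` by `-log (ε⁻ g)` (resp. `-log (ε⁺ g)`) moves the term in
the right direction. Summing over `y` and using `∑ g = 1` gives both bounds. -/

open scoped BigOperators

/-- Shannon entropy of a PMF on a finite set (with the convention `0 log 0 = 0`,
which holds automatically since `Real.log 0 = 0`). -/
noncomputable def pmfEntropy {Y : Type*} [Fintype Y] (f : Y → ℝ) : ℝ :=
  -∑ y, f y * Real.log (f y)

namespace Real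

variable {x y u v a b : ℝ}

lemma negMulLog_le_mul_neg_log (hv : 0 < v) (hvx : v ≤ x) (hxu : x ≤ u) (hx1 : x ≤ 1) :
    negMulLog x ≤ u * -log v := by
  have hx : 0 < x := hv.trans_le hvx
  have hlog : 0 ≤ -log x := neg_nonneg.mpr (log_nonpos hx.le hx1)
  calc negMulLog x = x * -log x := by rw [negMulLog, neg_mul_comm]
    _ ≤ u * -log x := mul_le_mul_of_nonneg_right hxu hlog
    _ ≤ u * -log v :=
        mul_le_mul_of_nonneg_left (neg_le_neg (log_le_log hv hvx)) (hx.le.trans hxu)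

lemma mul_neg_log_le_negMulLog (hv : 0 < v) (hvx : v ≤ x) (hxu : x ≤ u) (hx1 : x ≤ 1) :
    v * -log u ≤ negMulLog x := by
  have hx : 0 < x := hv.trans_le hvx
  have hlog : 0 ≤ -log x := neg_nonneg.mpr (log_nonpos hx.le hx1)
  calc v * -log u ≤ v * -log x := mul_le_mul_of_nonneg_left (neg_le_neg (log_le_log hx hxu)) hv.le
    _ ≤ x * -log x := mul_le_mul_of_nonneg_right hvx hlog
    _ = negMulLog x := by rw [negMulLog, neg_mul_comm]

lemma negMulLog_le_of_mul_le_of_le_mul (ha : 0 < a) (hy : 0 ≤ y) (hx1 : x ≤ 1)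
    (hlow : a * y ≤ x) (hhigh : x ≤ b * y) :
    negMulLog x ≤ b * (negMulLog y - y * log a) := by
  rcases hy.eq_or_lt with rfl | hy
  · obtain rfl : x = 0 := by simp only [mul_zero] at hlow hhigh; linarith
    simp
  calc negMulLog x ≤ b * y * -log (a * y) :=
        negMulLog_le_mul_neg_log (mul_pos ha hy) hlow hhigh hx1
    _ = b * (negMulLog y - y * log a) := by
        rw [log_mul ha.ne' hy.ne', negMulLog]; ring

lemma mul_le_negMulLog_of_mul_le_of_le_mul (ha : 0 < a) (hy : 0 ≤ y) (hx1 : x ≤ 1)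
    (hlow : a * y ≤ x) (hhigh : x ≤ b * y) :
    a * (negMulLog y - y * log b) ≤ negMulLog x := by
  rcases hy.eq_or_lt with rfl | hy
  · obtain rfl : x = 0 := by simp only [mul_zero] at hlow hhigh; linarith
    simp
  have hb : 0 < b := pos_of_mul_pos_left ((mul_pos ha hy).trans_le (hlow.trans hhigh)) hy.le
  calc a * (negMulLog y - y * log b) = a * y * -log (b * y) := by
        rw [log_mul hb.ne' hy.ne', negMulLog]; ring
    _ ≤ negMulLog x := mul_neg_log_le_negMulLog (mul_pos ha hy) hlow hhigh hx1

end Real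

section pmfEntropy

variable {Y : Type*} [Fintype Y]

lemma pmfEntropy_eq_sum_negMulLog (f : Y → ℝ) : pmfEntropy f = ∑ y, Real.negMulLog (f y) := by
  simp only [pmfEntropy, Real.negMulLog, neg_mul, Finset.sum_neg_distrib]

lemma sum_mul_negMulLog_sub_mul {g : Y → ℝ} (hg1 : ∑ y, g y = 1) (b c : ℝ) :
    ∑ y, b * (Real.negMulLog (g y) - g y * c) = b * pmfEntropy g - b * c := by
  rw [← Finset.mul_sum, Finset.sum_sub_distrib, ← Finset.sum_mul, hg1,
    ← pmfEntropy_eq_sum_negMulLog, one_mul, mul_sub]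

end pmfEntropy

theorem entropy_sandwich_general {Y : Type*} [Fintype Y]
    (f g : Y → ℝ)
    (hf0 : ∀ y, 0 ≤ f y) (hf1 : ∑ y, f y = 1)
    (hg0 : ∀ y, 0 ≤ g y) (hg1 : ∑ y, g y = 1)
    (εm εp : ℝ) (hεm : 0 < εm)
    (hlow : ∀ y, εm * g y ≤ f y) (hhigh : ∀ y, f y ≤ εp * g y) :
    pmfEntropy f ≤ εp * pmfEntropy g - εp * Real.log εm ∧
      εm * pmfEntropy g - εm * Real.log εp ≤ pmfEntropy f := by
  have hf_le_one (y : Y) : f y ≤ 1 :=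
    hf1 ▸ Finset.single_le_sum (fun z _ => hf0 z) (Finset.mem_univ y)
  rw [← sum_mul_negMulLog_sub_mul hg1, ← sum_mul_negMulLog_sub_mul hg1,
    pmfEntropy_eq_sum_negMulLog f]
  exact ⟨Finset.sum_le_sum fun y _ => Real.negMulLog_le_of_mul_le_of_le_mul hεm (hg0 y)
      (hf_le_one y) (hlow y) (hhigh y),
    Finset.sum_le_sum fun y _ => Real.mul_le_negMulLog_of_mul_le_of_le_mul hεm (hg0 y)
      (hf_le_one y) (hlow y) (hhigh y)⟩

/-- entropy sandwich bounds for multiplicatively-close PMFs. -/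
theorem entropy_sandwich {Y : Type*} [Fintype Y]
    (f g : Y → ℝ)
    (hf0 : ∀ y, 0 ≤ f y) (hf1 : ∑ y, f y = 1)
    (hg0 : ∀ y, 0 ≤ g y) (hg1 : ∑ y, g y = 1)
    (hgpos : ∀ y, f y ≠ 0 → 0 < g y)
    (εm εp : ℝ) (hεm : 0 < εm) (hεm1 : εm ≤ 1) (hεp1 : 1 ≤ εp)
    (hlow : ∀ y, εm * g y ≤ f y) (hhigh : ∀ y, f y ≤ εp * g y) :
    pmfEntropy f ≤ εp * pmfEntropy g - εp * Real.log εm ∧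
      εm * pmfEntropy g - εm * Real.log εp ≤ pmfEntropy f :=
  entropy_sandwich_general f g hf0 hf1 hg0 hg1 εm εp hεm hlow hhigh
end

section
/- Let f be a probability mass function on a product of finite sets Y₁×…×Y_h with marginals f₁,…,f_h, and suppose ε⁻ ∏ᵢ fᵢ(yᵢ) ≤ f(y) ≤ ε⁺ ∏ᵢ fᵢ(yᵢ) for all y, with 0 < ε⁻ ≤ 1 ≤ ε⁺. Then as ε⁺,ε⁻ → 1 (i.e., for any sequence of such f with ε⁺→1 and ε⁻→1), H(f) → Σᵢ H(fᵢ). In particular, |H(f) - Σᵢ H(fᵢ)| ≤ max(|ε⁺ - 1| Σᵢ H(fᵢ) - ε⁺ log ε⁻, |1 - ε⁻| Σᵢ H(fᵢ) - ε⁻ log ε⁺). -/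
open scoped BigOperators

/-- The `i`-th marginal of a PMF on a finite product. -/
noncomputable def marginal {h : ℕ} {Y : Fin h → Type*} [∀ i, Fintype (Y i)]
    [∀ i, DecidableEq (Y i)] (f : (∀ i, Y i) → ℝ) (i : Fin h) (x : Y i) : ℝ :=
  ∑ y : ∀ i, Y i, if y i = x then f y else 0

/-!
Write `g y = ∏ i, fᵢ (y i)`. Then `∑ i, H(fᵢ) = -∑ y, f y log g y`, so `∑ i, H(fᵢ) - H(f)` is the
Kullback–Leibler divergence `D(f ‖ g)`, nonnegative by Gibbs' inequality. As `f` and `g` both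
have mass 1, `D(f ‖ g) ≤ ∑ (f - g) log (f / g)`; pointwise `log (f / g) ∈ [log ε⁻, log ε⁺]`, and the
points where `f < g` carry a mass `∑ (g - f) ≤ 1 - ε⁻`. Hence
`D(f ‖ g) ≤ (1 - ε⁻) (log ε⁺ - log ε⁻) ≤ -ε⁺ log ε⁻`.
-/

open Real Finset

section RatioBounds

variable {a b εm εp : ℝ}

lemma sub_le_mul_log_sub_log (hεm : 0 < εm) (hb : 0 ≤ b) (hlow : εm * b ≤ a)
    (hhigh : a ≤ εp * b) : a - b ≤ a * (log a - log b) := by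
  rcases hb.eq_or_lt with rfl | hb
  · obtain rfl : a = 0 := le_antisymm (by simpa using hhigh) (by simpa using hlow)
    simp
  have ha : 0 < a := (mul_pos hεm hb).trans_le hlow
  have key := one_sub_inv_le_log_of_pos (div_pos ha hb)
  rw [inv_div, log_div ha.ne' hb.ne'] at key
  calc a - b = a * (1 - b / a) := by field_simp
    _ ≤ a * (log a - log b) := mul_le_mul_of_nonneg_left key ha.le

lemma mul_log_sub_log_le_of_ratio_bounds (hεm : 0 < εm) (hεm1 : εm ≤ 1) (hεp1 : 1 ≤ εp)
    (hb : 0 ≤ b) (hlow : εm * b ≤ a) (hhigh : a ≤ εp * b) :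
    a * (log a - log b) ≤ (a - b) * (1 + log εp) + (1 - εm) * (log εp - log εm) * b := by
  rcases hb.eq_or_lt with rfl | hb
  · obtain rfl : a = 0 := le_antisymm (by simpa using hhigh) (by simpa using hlow)
    simp
  have ha : 0 < a := (mul_pos hεm hb).trans_le hlow
  set L := log a - log b
  have hL_le : L ≤ log εp := by
    have := log_le_log ha hhigh
    rw [log_mul (by linarith) hb.ne'] at this
    linarith
  have hL_ge : log εm ≤ L := by
    have := log_le_log (mul_pos hεm hb) hlow
    rw [log_mul hεm.ne' hb.ne'] at this
    linarith
  have hbL : b * L ≤ a - b := by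
    have key := log_le_sub_one_of_pos (div_pos ha hb)
    rw [log_div ha.ne' hb.ne'] at key
    calc b * L ≤ b * (a / b - 1) := mul_le_mul_of_nonneg_left key hb.le
      _ = a - b := by field_simp
  have hlogεm : log εm ≤ 0 := log_nonpos hεm.le hεm1
  have hlogεp : 0 ≤ log εp := log_nonneg hεp1
  -- `(a - b) (L - log εp)` is nonpositive for `a ≥ b`; for `a < b` use `b - a ≤ (1 - εm) b`.
  have hcross : (a - b) * (L - log εp) ≤ (1 - εm) * (log εp - log εm) * b := by
    rcases le_total b a with hba | hab
    · nlinarith [mul_nonneg (mul_nonneg (sub_nonneg.2 hεm1) (sub_nonneg.2 (hlogεm.trans hlogεp)))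
        hb.le]
    · nlinarith [mul_le_mul_of_nonneg_left hL_ge (sub_nonneg.2 hab)]
  nlinarith

end RatioBounds

section SumBounds

variable {α : Type*} [Fintype α] {f g : α → ℝ} {εm εp : ℝ}

lemma sum_mul_log_sub_log_nonneg (hεm : 0 < εm) (hg : ∀ y, 0 ≤ g y)
    (hlow : ∀ y, εm * g y ≤ f y) (hhigh : ∀ y, f y ≤ εp * g y) (hsum : ∑ y, f y = ∑ y, g y) :
    0 ≤ ∑ y, f y * (log (f y) - log (g y)) :=
  calc (0 : ℝ) = ∑ y, (f y - g y) := by rw [sum_sub_distrib, hsum, sub_self]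
    _ ≤ _ := sum_le_sum fun y _ => sub_le_mul_log_sub_log hεm (hg y) (hlow y) (hhigh y)

lemma sum_mul_log_sub_log_le (hεm : 0 < εm) (hεm1 : εm ≤ 1) (hεp1 : 1 ≤ εp)
    (hg : ∀ y, 0 ≤ g y) (hlow : ∀ y, εm * g y ≤ f y) (hhigh : ∀ y, f y ≤ εp * g y)
    (hsum : ∑ y, f y = ∑ y, g y) :
    ∑ y, f y * (log (f y) - log (g y)) ≤ (1 - εm) * (log εp - log εm) * ∑ y, g y :=
  calc ∑ y, f y * (log (f y) - log (g y))
      ≤ ∑ y, ((f y - g y) * (1 + log εp) + (1 - εm) * (log εp - log εm) * g y) :=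
        sum_le_sum fun y _ =>
          mul_log_sub_log_le_of_ratio_bounds hεm hεm1 hεp1 (hg y) (hlow y) (hhigh y)
    _ = (1 - εm) * (log εp - log εm) * ∑ y, g y := by
        rw [sum_add_distrib, ← sum_mul, ← mul_sum, sum_sub_distrib, hsum, sub_self, zero_mul,
          zero_add]

end SumBounds

lemma one_sub_mul_log_sub_log_le {εm εp : ℝ} (hεm : 0 < εm) (hεm1 : εm ≤ 1) (hεp1 : 1 ≤ εp) :
    (1 - εm) * (log εp - log εm) ≤ -(εp * log εm) := by
  have h1 : 1 - εm ≤ -log εm := by linarith [log_le_sub_one_of_pos hεm]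
  have h2 : log εp ≤ εp - 1 := log_le_sub_one_of_pos (by linarith)
  nlinarith [mul_le_mul h1 h2 (log_nonneg hεp1) (by linarith)]

lemma pmfEntropy_nonneg {Y : Type*} [Fintype Y] {f : Y → ℝ} (hf0 : ∀ y, 0 ≤ f y)
    (hf1 : ∀ y, f y ≤ 1) : 0 ≤ pmfEntropy f := by
  rw [pmfEntropy, ← sum_neg_distrib]
  exact sum_nonneg fun y _ => by simpa [negMulLog] using negMulLog_nonneg (hf0 y) (hf1 y)

section Marginal

variable {h : ℕ} {Y : Fin h → Type*} [∀ i, Fintype (Y i)] [∀ i, DecidableEq (Y i)]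
  {f : (∀ i, Y i) → ℝ}

lemma sum_marginal_mul (i : Fin h) (φ : Y i → ℝ) :
    ∑ x, marginal f i x * φ x = ∑ y, f y * φ (y i) := by
  simp_rw [marginal, sum_mul, ite_mul, zero_mul]
  rw [sum_comm]
  simp

lemma sum_marginal (i : Fin h) : ∑ x, marginal f i x = ∑ y, f y := by
  simpa using sum_marginal_mul (f := f) i 1

lemma marginal_nonneg (hf0 : ∀ y, 0 ≤ f y) (i : Fin h) (x : Y i) : 0 ≤ marginal f i x :=
  sum_nonneg fun y _ => by split_ifs <;> simp [hf0 y]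

lemma le_marginal (hf0 : ∀ y, 0 ≤ f y) (i : Fin h) (y : ∀ i, Y i) : f y ≤ marginal f i (y i) := by
  simpa [marginal] using single_le_sum (fun y' _ => by split_ifs <;> simp [hf0 y'])
    (mem_univ y) (f := fun y' : ∀ i, Y i => if y' i = y i then f y' else 0)

lemma marginal_le_sum (hf0 : ∀ y, 0 ≤ f y) (i : Fin h) (x : Y i) :
    marginal f i x ≤ ∑ y, f y :=
  sum_le_sum fun y _ => by split_ifs <;> simp [hf0 y]

lemma sum_prod_marginal : ∑ y : ∀ i, Y i, ∏ i, marginal f i (y i) = (∑ y, f y) ^ h := by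
  rw [← Fintype.prod_sum]
  simp [sum_marginal]

lemma sum_pmfEntropy_marginal (hf0 : ∀ y, 0 ≤ f y) :
    ∑ i, pmfEntropy (marginal f i) = -∑ y, f y * log (∏ i, marginal f i (y i)) := by
  have hlog (y : ∀ i, Y i) :
      ∑ i, f y * log (marginal f i (y i)) = f y * log (∏ i, marginal f i (y i)) := by
    rcases (hf0 y).eq_or_lt with hy | hy
    · simp [← hy]
    rw [log_prod fun i _ => (hy.trans_le (le_marginal hf0 i y)).ne', mul_sum]
  simp_rw [pmfEntropy, sum_marginal_mul, sum_neg_distrib]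
  rw [sum_comm]
  simp_rw [hlog]

end Marginal

/-- if the joint PMF is multiplicatively `ε⁻, ε⁺`-close to the product of
its marginals, then the joint entropy is correspondingly close to the sum of the
marginal entropies; in particular `H(f) → Σᵢ H(fᵢ)` as `ε⁺, ε⁻ → 1`. -/
theorem entropy_close_to_sum_of_marginals {h : ℕ} {Y : Fin h → Type*}
    [∀ i, Fintype (Y i)] [∀ i, DecidableEq (Y i)]
    (f : (∀ i, Y i) → ℝ)
    (hf0 : ∀ y, 0 ≤ f y) (hf1 : ∑ y, f y = 1)
    (εm εp : ℝ) (hεm : 0 < εm) (hεm1 : εm ≤ 1) (hεp1 : 1 ≤ εp)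
    (hlow : ∀ y, εm * ∏ i, marginal f i (y i) ≤ f y)
    (hhigh : ∀ y, f y ≤ εp * ∏ i, marginal f i (y i)) :
    |pmfEntropy f - ∑ i, pmfEntropy (marginal f i)| ≤
      max (|εp - 1| * (∑ i, pmfEntropy (marginal f i)) - εp * Real.log εm)
          (|1 - εm| * (∑ i, pmfEntropy (marginal f i)) - εm * Real.log εp) := by
  set g : (∀ i, Y i) → ℝ := fun y => ∏ i, marginal f i (y i)
  have hg : ∀ y, 0 ≤ g y := fun y => prod_nonneg fun i _ => marginal_nonneg hf0 i (y i)
  have hgsum : ∑ y, g y = 1 := by rw [sum_prod_marginal, hf1, one_pow]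
  have hsum : ∑ y, f y = ∑ y, g y := hf1.trans hgsum.symm
  have hS : 0 ≤ ∑ i, pmfEntropy (marginal f i) := sum_nonneg fun i _ =>
    pmfEntropy_nonneg (marginal_nonneg hf0 i) fun x => hf1 ▸ marginal_le_sum hf0 i x
  have hKL : pmfEntropy f - ∑ i, pmfEntropy (marginal f i)
      = -∑ y, f y * (log (f y) - log (g y)) := by
    simp_rw [sum_pmfEntropy_marginal hf0, pmfEntropy, mul_sub, sum_sub_distrib]
    ring
  rw [hKL, abs_neg, abs_of_nonneg (sum_mul_log_sub_log_nonneg hεm hg hlow hhigh hsum)]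
  calc ∑ y, f y * (log (f y) - log (g y))
      ≤ (1 - εm) * (log εp - log εm) := by
        simpa [hgsum] using sum_mul_log_sub_log_le hεm hεm1 hεp1 hg hlow hhigh hsum
    _ ≤ -(εp * log εm) := one_sub_mul_log_sub_log_le hεm hεm1 hεp1
    _ ≤ |εp - 1| * (∑ i, pmfEntropy (marginal f i)) - εp * log εm := by
        linarith [mul_nonneg (abs_nonneg (εp - 1)) hS]
    _ ≤ _ := le_max_left _ _
end

section
/- Let X, Y be finitely-valued random vectors of length hk, broken into h consecutive blocks X^{(1)},…,X^{(h)} and Y^{(1)},…,Y^{(h)} of length k. Suppose X has iid components (in particular the blocks X^{(i)} are iid) and the conditional PMF satisfies ε⁻ ∏_i f(y^{(i)}|x^{(i)}) ≤ f(y|x) ≤ ε⁺ ∏_i f(y^{(i)}|x^{(i)}) for all x, y, with 0 < ε⁻ ≤ 1 ≤ ε⁺, where f(y^{(i)}|x^{(i)}) denotes the common per-block conditional PMF. Then ε⁻ h H(Y^{(1)}|X^{(1)}) - ε⁻ log ε⁺ ≤ H(Y|X) ≤ ε⁺ h H(Y^{(1)}|X^{(1)}) - ε⁺ log ε⁻.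 -/
/-!
With `G x y = ∏ i, w (x i) (y i)`, each `F = f x y ∈ [0, 1]` lies between `εm G` and `εp G`, so
monotonicity of `log` together with `-log F ≥ 0` squeezes `-F log F` between
`εm G (-log εp - log G)` and `εp G (-log εm - log G)`. Averaging over the iid law of `X` leaves the
conditional entropy of the product kernel `G`, which is `h` times that of a single block.
-/

section

open Finset Real

variable {ι α β : Type*} [Fintype ι] [DecidableEq ι] [Fintype α] [Fintype β]

noncomputable def condEntropy (p : α → ℝ) (K : α → β → ℝ) : ℝ :=
  ∑ x, p x * ∑ y, negMulLog (K x y)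

theorem condEntropy_eq_neg_sum (p : α → ℝ) (K : α → β → ℝ) :
    condEntropy p K = -∑ x, ∑ y, p x * K x y * log (K x y) := by
  simp only [condEntropy, negMulLog, mul_sum, ← sum_neg_distrib]
  exact sum_congr rfl fun _ _ => sum_congr rfl fun _ _ => by ring

theorem sum_pi_prod_eq_one (q : ι → α → ℝ) (hq : ∀ i, ∑ a, q i a = 1) :
    ∑ z : ι → α, ∏ i, q i (z i) = 1 := by
  simp [← Fintype.prod_sum, hq]

theorem sum_pi_prod_mul_apply (q : ι → α → ℝ) (hq : ∀ i, ∑ a, q i a = 1) (r : α → ℝ)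
    (i : ι) : ∑ z : ι → α, (∏ j, q j (z j)) * r (z i) = ∑ a, q i a * r a := by
  have hsplit (z : ι → α) : (∏ j, q j (z j)) * r (z i) =
      ∏ j, q j (z j) * if j = i then r (z j) else 1 := by
    rw [prod_mul_distrib, prod_ite_eq_of_mem' _ _ _ (mem_univ i)]
  have hfactor (j : ι) : (∑ a, q j a * if j = i then r a else 1) =
      if j = i then ∑ a, q i a * r a else 1 := by
    by_cases hj : j = i
    · subst hj; simp
    · simp [hj, hq j]
  simp_rw [hsplit]
  rw [← Fintype.prod_sum fun j a => q j a * if j = i then r a else 1]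
  simp_rw [hfactor]
  exact prod_ite_eq_of_mem' _ _ _ (mem_univ i)

theorem sum_pi_prod_mul_sum_apply (q : ι → α → ℝ) (hq : ∀ i, ∑ a, q i a = 1)
    (r : ι → α → ℝ) :
    ∑ z : ι → α, (∏ j, q j (z j)) * ∑ i, r i (z i) = ∑ i, ∑ a, q i a * r i a := by
  simp_rw [mul_sum]
  rw [sum_comm]
  exact sum_congr rfl fun i _ => sum_pi_prod_mul_apply q hq (r i) i

theorem sum_negMulLog_pi_prod (q : ι → α → ℝ) (hq : ∀ i, ∑ a, q i a = 1) :
    ∑ z : ι → α, negMulLog (∏ i, q i (z i)) = ∑ i, ∑ a, negMulLog (q i a) := by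
  have hlog (z : ι → α) :
      negMulLog (∏ i, q i (z i)) = (∏ i, q i (z i)) * ∑ i, -log (q i (z i)) := by
    by_cases hz : ∏ i, q i (z i) = 0
    · simp [hz]
    · rw [negMulLog, log_prod fun i _ => prod_ne_zero_iff.mp hz i (mem_univ i),
        sum_neg_distrib]
      ring
  simp_rw [hlog]
  rw [sum_pi_prod_mul_sum_apply q hq fun i a => -log (q i a)]
  simp [negMulLog]

theorem condEntropy_pi (p : ι → α → ℝ) (hp : ∀ i, ∑ a, p i a = 1) (K : ι → α → β → ℝ)
    (hK : ∀ i a, ∑ b, K i a b = 1) :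
    condEntropy (fun x : ι → α => ∏ i, p i (x i))
        (fun (x : ι → α) (y : ι → β) => ∏ i, K i (x i) (y i)) =
      ∑ i, condEntropy (p i) (K i) := by
  simp only [condEntropy]
  simp_rw [sum_negMulLog_pi_prod _ fun i => hK i _]
  exact sum_pi_prod_mul_sum_apply p hp fun i a => ∑ b, negMulLog (K i a b)

theorem mul_negMulLog_sub_le_negMulLog {a b g F : ℝ} (ha : 0 < a) (hg : 0 ≤ g) (hF : F ≤ 1)
    (hlow : a * g ≤ F) (hhigh : F ≤ b * g) : a * (negMulLog g - g * log b) ≤ negMulLog F := by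
  rcases hg.eq_or_lt with rfl | hg
  · simpa using negMulLog_nonneg (by simpa using hlow) hF
  have hF0 : 0 < F := (mul_pos ha hg).trans_le hlow
  have hb : 0 < b := pos_of_mul_pos_left (hF0.trans_le hhigh) hg.le
  calc a * (negMulLog g - g * log b) = a * g * -log (b * g) := by
        rw [negMulLog, log_mul hb.ne' hg.ne']; ring
    _ ≤ a * g * -log F := by gcongr
    _ ≤ F * -log F := mul_le_mul_of_nonneg_right hlow (neg_nonneg.mpr (log_nonpos hF0.le hF))
    _ = negMulLog F := by rw [negMulLog]; ring

theorem negMulLog_le_mul_negMulLog_sub {a b g F : ℝ} (ha : 0 < a) (hg : 0 ≤ g) (hF : F ≤ 1)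
    (hlow : a * g ≤ F) (hhigh : F ≤ b * g) : negMulLog F ≤ b * (negMulLog g - g * log a) := by
  rcases hg.eq_or_lt with rfl | hg
  · simp [le_antisymm (by simpa using hhigh) (by simpa using hlow)]
  have hF0 : 0 < F := (mul_pos ha hg).trans_le hlow
  calc negMulLog F = F * -log F := by rw [negMulLog]; ring
    _ ≤ b * g * -log F := mul_le_mul_of_nonneg_right hhigh (neg_nonneg.mpr (log_nonpos hF0.le hF))
    _ ≤ b * g * -log (a * g) := by
        have : 0 ≤ b * g := hF0.le.trans hhigh
        gcongr
    _ = b * (negMulLog g - g * log a) := by rw [negMulLog, log_mul ha.ne' hg.ne']; ring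

theorem mul_condEntropy_sub_eq {p : α → ℝ} {L : α → β → ℝ} (hp : ∑ x, p x = 1)
    (hL : ∀ x, ∑ y, L x y = 1) (c d : ℝ) :
    c * (condEntropy p L - d) = ∑ x, p x * ∑ y, c * (negMulLog (L x y) - L x y * d) := by
  have inner (x : α) :
      ∑ y, c * (negMulLog (L x y) - L x y * d) = c * ∑ y, negMulLog (L x y) - c * d := by
    simp only [mul_sub, sum_sub_distrib, ← mul_sum, ← mul_assoc, ← sum_mul, hL x]; ring
  simp_rw [inner]
  simp only [condEntropy, mul_sub, sum_sub_distrib, ← sum_mul, hp, mul_sum]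
  ring_nf

variable {p : α → ℝ} {K L : α → β → ℝ} {a b : ℝ}

theorem mul_condEntropy_sub_log_le_condEntropy (hp0 : ∀ x, 0 ≤ p x) (hp1 : ∑ x, p x = 1)
    (hL0 : ∀ x y, 0 ≤ L x y) (hL1 : ∀ x, ∑ y, L x y = 1) (hK1 : ∀ x y, K x y ≤ 1) (ha : 0 < a)
    (hlow : ∀ x y, a * L x y ≤ K x y) (hhigh : ∀ x y, K x y ≤ b * L x y) :
    a * (condEntropy p L - log b) ≤ condEntropy p K := by
  rw [mul_condEntropy_sub_eq hp1 hL1, condEntropy]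
  gcongr with x _ y _
  · exact hp0 x
  · exact mul_negMulLog_sub_le_negMulLog ha (hL0 x y) (hK1 x y) (hlow x y) (hhigh x y)

theorem condEntropy_le_mul_condEntropy_sub_log (hp0 : ∀ x, 0 ≤ p x) (hp1 : ∑ x, p x = 1)
    (hL0 : ∀ x y, 0 ≤ L x y) (hL1 : ∀ x, ∑ y, L x y = 1) (hK1 : ∀ x y, K x y ≤ 1) (ha : 0 < a)
    (hlow : ∀ x y, a * L x y ≤ K x y) (hhigh : ∀ x y, K x y ≤ b * L x y) :
    condEntropy p K ≤ b * (condEntropy p L - log a) := by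
  rw [mul_condEntropy_sub_eq hp1 hL1, condEntropy]
  gcongr with x _ y _
  · exact hp0 x
  · exact negMulLog_le_mul_negMulLog_sub ha (hL0 x y) (hK1 x y) (hlow x y) (hhigh x y)

end

theorem conditional_entropy_sandwich_general {B C : Type*} [Fintype B] [Fintype C] {h : ℕ}
    (px : B → ℝ) (hpx0 : ∀ b, 0 ≤ px b) (hpx1 : ∑ b, px b = 1)
    (w : B → C → ℝ) (hw0 : ∀ b c, 0 ≤ w b c) (hw1 : ∀ b, ∑ c, w b c = 1)
    (f : (Fin h → B) → (Fin h → C) → ℝ)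
    (hf1 : ∀ x, ∑ y, f x y = 1)
    (εm εp : ℝ) (hεm : 0 < εm)
    (hlow : ∀ x y, εm * ∏ i, w (x i) (y i) ≤ f x y)
    (hhigh : ∀ x y, f x y ≤ εp * ∏ i, w (x i) (y i)) :
    εm * (h : ℝ) * (-∑ b, ∑ c, px b * w b c * Real.log (w b c)) - εm * Real.log εp ≤
        -∑ x : Fin h → B, ∑ y : Fin h → C,
            (∏ i, px (x i)) * f x y * Real.log (f x y) ∧
      -∑ x : Fin h → B, ∑ y : Fin h → C,
            (∏ i, px (x i)) * f x y * Real.log (f x y) ≤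
        εp * (h : ℝ) * (-∑ b, ∑ c, px b * w b c * Real.log (w b c)) - εp * Real.log εm := by
  set P : (Fin h → B) → ℝ := fun x => ∏ i, px (x i)
  set G : (Fin h → B) → (Fin h → C) → ℝ := fun x y => ∏ i, w (x i) (y i)
  have hP0 x : 0 ≤ P x := Finset.prod_nonneg fun i _ => hpx0 (x i)
  have hP1 : ∑ x, P x = 1 := sum_pi_prod_eq_one (fun _ => px) fun _ => hpx1
  have hG0 x y : 0 ≤ G x y := Finset.prod_nonneg fun i _ => hw0 (x i) (y i)
  have hG1 x : ∑ y, G x y = 1 := sum_pi_prod_eq_one (fun i => w (x i)) fun i => hw1 (x i)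
  have hf_le_one x y : f x y ≤ 1 := hf1 x ▸ Finset.single_le_sum
    (fun y' _ => (mul_nonneg hεm.le (hG0 x y')).trans (hlow x y')) (Finset.mem_univ y)
  have hblock : condEntropy P G = h * condEntropy px w := by
    simpa using condEntropy_pi (fun (_ : Fin h) => px) (fun _ => hpx1) (fun _ => w) (fun _ => hw1)
  rw [← condEntropy_eq_neg_sum px w, ← condEntropy_eq_neg_sum P f]
  constructor
  · calc _ = εm * (condEntropy P G - Real.log εp) := by rw [hblock]; ring
      _ ≤ _ := mul_condEntropy_sub_log_le_condEntropy hP0 hP1 hG0 hG1 hf_le_one hεm hlow hhigh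
  · calc _ ≤ εp * (condEntropy P G - Real.log εm) :=
          condEntropy_le_mul_condEntropy_sub_log hP0 hP1 hG0 hG1 hf_le_one hεm hlow hhigh
      _ = _ := by rw [hblock]; ring

/-- conditional-entropy sandwich bound for a block channel with iid
block inputs whose conditional PMF is multiplicatively close to a product of identical
per-block conditional PMFs.  Here `B` is the alphabet of a length-`k` input block, `C`
that of a length-`k` output block, `px` the common (iid) per-block input PMF, `w` the
common per-block conditional PMF, and `f` the joint conditional PMF over `h` blocks. -/
theorem conditional_entropy_sandwich {B C : Type*} [Fintype B] [Fintype C] {h : ℕ}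
    (px : B → ℝ) (hpx0 : ∀ b, 0 ≤ px b) (hpx1 : ∑ b, px b = 1)
    (w : B → C → ℝ) (hw0 : ∀ b c, 0 ≤ w b c) (hw1 : ∀ b, ∑ c, w b c = 1)
    (f : (Fin h → B) → (Fin h → C) → ℝ)
    (hf0 : ∀ x y, 0 ≤ f x y) (hf1 : ∀ x, ∑ y, f x y = 1)
    (εm εp : ℝ) (hεm : 0 < εm) (hεm1 : εm ≤ 1) (hεp1 : 1 ≤ εp)
    (hlow : ∀ x y, εm * ∏ i, w (x i) (y i) ≤ f x y)
    (hhigh : ∀ x y, f x y ≤ εp * ∏ i, w (x i) (y i)) :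
    εm * (h : ℝ) * (-∑ b, ∑ c, px b * w b c * Real.log (w b c)) - εm * Real.log εp ≤
        -∑ x : Fin h → B, ∑ y : Fin h → C,
            (∏ i, px (x i)) * f x y * Real.log (f x y) ∧
      -∑ x : Fin h → B, ∑ y : Fin h → C,
            (∏ i, px (x i)) * f x y * Real.log (f x y) ≤
        εp * (h : ℝ) * (-∑ b, ∑ c, px b * w b c * Real.log (w b c)) - εp * Real.log εm :=
  conditional_entropy_sandwich_general px hpx0 hpx1 w hw0 hw1 f hf1 εm εp hεm hlow hhigh
end

section
/- If c* belongs to the broken-chain degraded family D_c of a Markov channel c (i.e., there exists side information U, independent of the input, whose knowledge turns c* into independent piecewise segments each distributed as c), and c' is formed by mixing c and c* with parameters μ₁₂, μ₂₁ ∈ (0,1), then c' also belongs to D_c. -/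
open scoped BigOperators

/-- An abstract channel: a conditional weight for each input/output sequence pair. -/
def SeqChannel (X Y : Type*) : Type _ := List X → List Y → ℝ

/-- The law of a hidden-Markov (Markov) channel run from initial state distribution
`init`, with state transition kernel `P` and state-dependent memoryless noise `f`. -/
noncomputable def hmmLaw {S X Y : Type*} [Fintype S]
    (P : S → S → ℝ) (f : S → X → Y → ℝ) : (S → ℝ) → List X → List Y → ℝ
  | _, [], [] => 1
  | init, x :: xs, y :: ys => ∑ s, init s * f s x y * hmmLaw P f (P s) xs ys
  | _, _, _ => 0

/-- A finite-state Markov channel: hidden state chain `P` with steady-state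
distribution `π`, independent of the input, and memoryless-given-state noise `f`. -/
structure MarkovChannel (S X Y : Type*) [Fintype S] where
  P : S → S → ℝ
  π : S → ℝ
  f : S → X → Y → ℝ

/-- The input-output law of a Markov channel (started in steady state). -/
noncomputable def MarkovChannel.law {S X Y : Type*} [Fintype S]
    (c : MarkovChannel S X Y) : SeqChannel X Y :=
  hmmLaw c.P c.f c.π

/-- The law of a piecewise channel: the sequence is cut into independent segments
according to the composition `cmp` of `n`, and the channel `W` acts independently
(restarting) on each segment. -/
noncomputable def pieceLaw {X Y : Type*} (W : SeqChannel X Y) (n : ℕ)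
    (cmp : Composition n) (xs : List X) (ys : List Y) : ℝ :=
  (((xs.splitWrtComposition cmp).zip (ys.splitWrtComposition cmp)).map
    (fun p => W p.1 p.2)).prod

/-- The broken-chain degraded family: `W* ∈ D_W` iff for each block length `n` there
is side information `U` (finitely valued, with distribution `q` independent of the
input) such that, conditionally on `U = u`, the channel decomposes into independent
piecewise segments each governed by `W`. -/
def BrokenChainDegraded {X Y : Type*} (W Wstar : SeqChannel X Y) : Prop :=
  ∀ n : ℕ, ∃ (U : Type) (_ : Fintype U) (q : U → ℝ) (seg : U → Composition n),
    (∀ u, 0 ≤ q u) ∧ (∑ u, q u = 1) ∧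
      ∀ (xs : List X) (ys : List Y), xs.length = n → ys.length = n →
        Wstar xs ys = ∑ u, q u * pieceLaw W n (seg u) xs ys

/-- The mixing operator on Markov channels: the state machine jumps from that of `c₁`
to that of `c₂` with per-step probability `μ₁₂` (restarting in the steady state `c₂.π`)
and back with probability `μ₂₁` (restarting in `c₁.π`). -/
noncomputable def MarkovChannel.mix {S₁ S₂ X Y : Type*} [Fintype S₁] [Fintype S₂]
    (c₁ : MarkovChannel S₁ X Y) (c₂ : MarkovChannel S₂ X Y) (μ₁₂ μ₂₁ : ℝ) :
    MarkovChannel (S₁ ⊕ S₂) X Y where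
  P := fun s t =>
    match s, t with
    | .inl s₁, .inl t₁ => (1 - μ₁₂) * c₁.P s₁ t₁
    | .inl _,  .inr t₂ => μ₁₂ * c₂.π t₂
    | .inr _,  .inl t₁ => μ₂₁ * c₁.π t₁
    | .inr s₂, .inr t₂ => (1 - μ₂₁) * c₂.P s₂ t₂
  π := Sum.elim (fun s₁ => (μ₂₁ / (μ₁₂ + μ₂₁)) * c₁.π s₁)
                (fun s₂ => (1 - μ₂₁ / (μ₁₂ + μ₂₁)) * c₂.π s₂)
  f := Sum.elim c₁.f c₂.f

/-!
Started inside the machine of `c₁`, the mixed chain runs `c₁` up to a switching time that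
happens with probability `μ` at each step and is independent of the input, and then restarts
in the steady state of the machine of `c₂`; symmetrically from the machine of `c₂`. Each
restarted law is therefore a mixture, over the switching time, of `c₁.law` (resp. `c₂.law`) on
an initial segment concatenated with the other restarted law on a strictly shorter remainder.
Broken-chain representations by `W` survive mixtures and concatenations, so strong induction
on the block length represents both restarted laws, and the stationary law of the mixed
channel is their mixture with weights `μ₂₁ / (μ₁₂ + μ₂₁)` and `μ₁₂ / (μ₁₂ + μ₂₁)`. The theorem
is the case `W = c.law`, which represents itself with a single block.
-/

theorem List.splitWrtCompositionAux_append {α : Type*} (l : List α) (ns ms : List ℕ) :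
    l.splitWrtCompositionAux (ns ++ ms) =
      (l.take ns.sum).splitWrtCompositionAux ns ++ (l.drop ns.sum).splitWrtCompositionAux ms := by
  induction ns generalizing l with
  | nil => simp [List.splitWrtCompositionAux]
  | cons n ns ih =>
    simp [List.splitWrtCompositionAux_cons, ih, List.take_take, List.drop_take, List.drop_drop]

theorem List.splitWrtComposition_append {α : Type*} {m n : ℕ} (l : List α)
    (c₁ : Composition m) (c₂ : Composition n) :
    l.splitWrtComposition (c₁.append c₂) =
      (l.take m).splitWrtComposition c₁ ++ (l.drop m).splitWrtComposition c₂ := by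
  simpa [List.splitWrtComposition, c₁.blocks_sum] using
    l.splitWrtCompositionAux_append c₁.blocks c₂.blocks

namespace SeqChannel

variable {X Y : Type*}

def concat (A B : SeqChannel X Y) (a : ℕ) : SeqChannel X Y :=
  fun xs ys => A (xs.take a) (ys.take a) * B (xs.drop a) (ys.drop a)

/-- Run `A` until a switching time that occurs at each step with probability `μ`, then run `B`
afresh; the `j`-th summand is the event of switching right after step `j + 1`. -/
noncomputable def switch (A B : SeqChannel X Y) (μ : ℝ) : SeqChannel X Y :=
  fun xs ys => ∑ j ∈ Finset.range xs.length, (1 - μ) ^ j * μ * A.concat B (j + 1) xs ys +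
    (1 - μ) ^ xs.length * A xs ys

end SeqChannel

section BrokenChain

variable {X Y : Type*}

theorem pieceLaw_append (W : SeqChannel X Y) {a b : ℕ} (c₁ : Composition a) (c₂ : Composition b) :
    pieceLaw W (a + b) (c₁.append c₂) =
      SeqChannel.concat (pieceLaw W a c₁) (pieceLaw W b c₂) a := by
  funext xs ys
  simp only [pieceLaw, SeqChannel.concat, List.splitWrtComposition_append]
  rw [List.zip_append (by simp), List.map_append, List.prod_append]

theorem pieceLaw_single (W : SeqChannel X Y) {n : ℕ} (hn : 0 < n) {xs : List X} {ys : List Y}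
    (hx : xs.length ≤ n) (hy : ys.length ≤ n) :
    pieceLaw W n (Composition.single n hn) xs ys = W xs ys := by
  simp [pieceLaw, List.splitWrtComposition, List.splitWrtCompositionAux, List.take_of_length_le,
    hx, hy]

theorem pieceLaw_zero (W : SeqChannel X Y) (γ : Composition 0) :
    pieceLaw W 0 γ = fun _ _ => 1 := by
  funext xs ys
  simp [pieceLaw, List.splitWrtComposition, List.splitWrtCompositionAux, γ.blocks_eq_nil.2 rfl]

def IsBrokenChainAt (W V : SeqChannel X Y) (n : ℕ) : Prop :=
  ∃ (U : Type) (_ : Fintype U) (q : U → ℝ) (seg : U → Composition n),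
    (∀ u, 0 ≤ q u) ∧ (∑ u, q u = 1) ∧
      ∀ (xs : List X) (ys : List Y), xs.length = n → ys.length = n →
        V xs ys = ∑ u, q u * pieceLaw W n (seg u) xs ys

variable {W V V' : SeqChannel X Y} {n : ℕ}

theorem IsBrokenChainAt.congr (hV : IsBrokenChainAt W V n)
    (h : ∀ (xs : List X) (ys : List Y), xs.length = n → ys.length = n → V xs ys = V' xs ys) :
    IsBrokenChainAt W V' n := by
  obtain ⟨U, _, q, seg, hq0, hq1, hVeq⟩ := hV
  exact ⟨U, _, q, seg, hq0, hq1, fun xs ys hx hy => (h xs ys hx hy).symm.trans (hVeq xs ys hx hy)⟩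

theorem isBrokenChainAt_pieceLaw (γ : Composition n) : IsBrokenChainAt W (pieceLaw W n γ) n :=
  ⟨Unit, inferInstance, fun _ => 1, fun _ => γ, by simp, by simp, by simp⟩

theorem brokenChainDegraded_self (h : W [] [] = 1) : BrokenChainDegraded W W := by
  intro n
  rcases n.eq_zero_or_pos with rfl | hn
  · refine (isBrokenChainAt_pieceLaw (Composition.ones 0)).congr fun xs ys hx hy => ?_
    rw [List.length_eq_zero_iff.1 hx, List.length_eq_zero_iff.1 hy, pieceLaw_zero, h]
  · exact (isBrokenChainAt_pieceLaw (Composition.single n hn)).congr fun xs ys hx hy =>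
      pieceLaw_single W hn hx.le hy.le

theorem IsBrokenChainAt.sum {ι : Type} [Fintype ι] {w : ι → ℝ} {V : ι → SeqChannel X Y}
    (hw0 : ∀ i, 0 ≤ w i) (hw1 : ∑ i, w i = 1) (hV : ∀ i, IsBrokenChainAt W (V i) n) :
    IsBrokenChainAt W (fun xs ys => ∑ i, w i * V i xs ys) n := by
  choose U hU q seg hq0 hq1 hVeq using hV
  refine ⟨(i : ι) × U i, inferInstance, fun p => w p.1 * q p.1 p.2, fun p => seg p.1 p.2,
    fun p => mul_nonneg (hw0 p.1) (hq0 p.1 p.2), ?_, fun xs ys hx hy => ?_⟩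
  · simp [Fintype.sum_sigma, ← Finset.mul_sum, hq1, hw1]
  · simp [Fintype.sum_sigma, hVeq _ xs ys hx hy, Finset.mul_sum, mul_assoc]

theorem IsBrokenChainAt.concat {A B : SeqChannel X Y} {a b : ℕ} (hA : IsBrokenChainAt W A a)
    (hB : IsBrokenChainAt W B b) : IsBrokenChainAt W (A.concat B a) (a + b) := by
  obtain ⟨U, _, q, seg, hq0, hq1, hAeq⟩ := hA
  obtain ⟨U', _, q', seg', hq0', hq1', hBeq⟩ := hB
  refine ⟨U × U', inferInstance, fun p => q p.1 * q' p.2, fun p => (seg p.1).append (seg' p.2),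
    fun p => mul_nonneg (hq0 p.1) (hq0' p.2), ?_, fun xs ys hx hy => ?_⟩
  · simp [Fintype.sum_prod_type, ← Finset.mul_sum, hq1, hq1']
  · rw [SeqChannel.concat, hAeq _ _ (by simp [hx]) (by simp [hy]),
      hBeq _ _ (by simp [hx]) (by simp [hy]), Finset.sum_mul_sum, Fintype.sum_prod_type]
    simp only [pieceLaw_append, SeqChannel.concat]
    exact Finset.sum_congr rfl fun u _ => Finset.sum_congr rfl fun v _ => by ring

theorem isBrokenChainAt_switch {A B : SeqChannel X Y} {μ : ℝ} (hμ0 : 0 ≤ μ) (hμ1 : μ ≤ 1)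
    (hA : ∀ m, IsBrokenChainAt W A m) (hB : ∀ m < n, IsBrokenChainAt W B m) :
    IsBrokenChainAt W (A.switch B μ) n := by
  have hjump (j : Fin n) : IsBrokenChainAt W (A.concat B (j + 1)) n := by
    have h := (hA (j + 1)).concat (hB (n - (j + 1)) (by omega))
    rwa [show (j : ℕ) + 1 + (n - (j + 1)) = n by omega] at h
  refine (IsBrokenChainAt.sum
    (w := fun o => Option.elim o ((1 - μ) ^ n) fun j : Fin n => (1 - μ) ^ (j : ℕ) * μ)
    (V := fun o => Option.elim o A fun j : Fin n => A.concat B (j + 1)) ?_ ?_ ?_).congr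
    fun xs ys hx hy => ?_
  · rintro (_ | j) <;> simp only [Option.elim] <;> positivity
  · rw [Fintype.sum_option]
    simp only [Option.elim]
    rw [Fin.sum_univ_eq_sum_range (fun j => (1 - μ) ^ j * μ), ← Finset.sum_mul]
    linear_combination geom_sum_mul_neg (1 - μ) n
  · rintro (_ | j)
    · exact hA n
    · exact hjump j
  · simp only [SeqChannel.switch, Fintype.sum_option, Option.elim, hx]
    rw [Fin.sum_univ_eq_sum_range (fun j => (1 - μ) ^ j * μ * A.concat B (j + 1) xs ys)]
    ring

end BrokenChain

section HiddenMarkov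

variable {S S₁ S₂ T X Y : Type*} [Fintype S] [Fintype S₁] [Fintype S₂] [Fintype T]

theorem hmmLaw_equiv (e : S ≃ T) (P : T → T → ℝ) (f : T → X → Y → ℝ) (init : T → ℝ) :
    hmmLaw (fun s t => P (e s) (e t)) (fun s => f (e s)) (init ∘ e) = hmmLaw P f init := by
  funext xs ys
  induction xs generalizing ys init with
  | nil => cases ys <;> rfl
  | cons x xs ih =>
    cases ys with
    | nil => rfl
    | cons y ys => exact Fintype.sum_equiv e _ _ fun s => by rw [← ih (P (e s))]; rfl

theorem hmmLaw_sumElim (P : S₁ ⊕ S₂ → S₁ ⊕ S₂ → ℝ) (f : S₁ ⊕ S₂ → X → Y → ℝ) {a b : ℝ}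
    (hab : a + b = 1) (i₁ : S₁ → ℝ) (i₂ : S₂ → ℝ) (xs : List X) (ys : List Y) :
    hmmLaw P f (Sum.elim (fun s => a * i₁ s) (fun s => b * i₂ s)) xs ys =
      a * hmmLaw P f (Sum.elim i₁ 0) xs ys + b * hmmLaw P f (Sum.elim 0 i₂) xs ys := by
  rcases xs with _ | ⟨x, xs⟩ <;> rcases ys with _ | ⟨y, ys⟩
  · simp [hmmLaw, hab]
  all_goals simp [hmmLaw, Fintype.sum_sum_type, Finset.mul_sum, mul_assoc]

theorem concat_hmmLaw_cons (P : S → S → ℝ) (f : S → X → Y → ℝ) (init : S → ℝ)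
    (B : SeqChannel X Y) (j : ℕ) (x : X) (xs : List X) (y : Y) (ys : List Y) :
    SeqChannel.concat (hmmLaw P f init) B (j + 1) (x :: xs) (y :: ys) =
      ∑ s, init s * f s x y * SeqChannel.concat (hmmLaw P f (P s)) B j xs ys := by
  simp [SeqChannel.concat, hmmLaw, Finset.sum_mul, mul_assoc]

theorem switch_hmmLaw_cons (P : S → S → ℝ) (f : S → X → Y → ℝ) (init : S → ℝ)
    (B : SeqChannel X Y) (μ : ℝ) (x : X) (xs : List X) (y : Y) (ys : List Y) :
    SeqChannel.switch (hmmLaw P f init) B μ (x :: xs) (y :: ys) =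
      ∑ s, init s * f s x y *
        ((1 - μ) * SeqChannel.switch (hmmLaw P f (P s)) B μ xs ys + μ * B xs ys) := by
  have hB (s : S) : SeqChannel.concat (hmmLaw P f (P s)) B 0 xs ys = B xs ys := by
    simp [SeqChannel.concat, hmmLaw]
  simp only [SeqChannel.switch, List.length_cons, Finset.sum_range_succ', concat_hmmLaw_cons, hB]
  simp only [hmmLaw, Finset.mul_sum, mul_add, Finset.sum_add_distrib]
  rw [Finset.sum_comm, add_right_comm]
  congr 1
  · congr 1
    · exact Finset.sum_congr rfl fun s _ => Finset.sum_congr rfl fun j _ => by ring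
    · exact Finset.sum_congr rfl fun s _ => by ring
  · exact Finset.sum_congr rfl fun s _ => by ring

end HiddenMarkov

namespace MarkovChannel

variable {S₁ S₂ X Y : Type*} [Fintype S₁] [Fintype S₂]
  (c₁ : MarkovChannel S₁ X Y) (c₂ : MarkovChannel S₂ X Y) (μ ν : ℝ)

theorem hmmLaw_mix_swap (i₁ : S₁ → ℝ) (i₂ : S₂ → ℝ) :
    hmmLaw (c₁.mix c₂ μ ν).P (c₁.mix c₂ μ ν).f (Sum.elim i₁ i₂) =
      hmmLaw (c₂.mix c₁ ν μ).P (c₂.mix c₁ ν μ).f (Sum.elim i₂ i₁) := by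
  rw [← hmmLaw_equiv (Equiv.sumComm S₂ S₁)]
  congr 1
  · funext s t; cases s <;> cases t <;> rfl
  · funext s; cases s <;> rfl
  · funext s; cases s <;> rfl

theorem mix_P_inl (s : S₁) :
    (c₁.mix c₂ μ ν).P (.inl s) = Sum.elim (fun t => (1 - μ) * c₁.P s t) (fun t => μ * c₂.π t) := by
  funext t; cases t <;> rfl

theorem hmmLaw_mix_inl (init : S₁ → ℝ) :
    hmmLaw (c₁.mix c₂ μ ν).P (c₁.mix c₂ μ ν).f (Sum.elim init 0) =
      SeqChannel.switch (hmmLaw c₁.P c₁.f init)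
        (hmmLaw (c₁.mix c₂ μ ν).P (c₁.mix c₂ μ ν).f (Sum.elim 0 c₂.π)) μ := by
  funext xs ys
  induction xs generalizing init ys with
  | nil => cases ys <;> simp [SeqChannel.switch, hmmLaw]
  | cons x xs ih =>
    cases ys with
    | nil => simp [SeqChannel.switch, SeqChannel.concat, hmmLaw]
    | cons y ys =>
      refine Eq.trans ?_ (switch_hmmLaw_cons _ _ _ _ _ x xs y ys).symm
      simp only [← ih]
      simp only [hmmLaw, Fintype.sum_sum_type, Sum.elim_inl, Sum.elim_inr, Pi.zero_apply, zero_mul,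
        Finset.sum_const_zero, add_zero]
      refine Finset.sum_congr rfl fun s _ => ?_
      rw [mix_P_inl, hmmLaw_sumElim _ _ (sub_add_cancel 1 μ)]
      rfl

theorem hmmLaw_mix_inr (init : S₂ → ℝ) :
    hmmLaw (c₁.mix c₂ μ ν).P (c₁.mix c₂ μ ν).f (Sum.elim 0 init) =
      SeqChannel.switch (hmmLaw c₂.P c₂.f init)
        (hmmLaw (c₁.mix c₂ μ ν).P (c₁.mix c₂ μ ν).f (Sum.elim c₁.π 0)) ν := by
  rw [hmmLaw_mix_swap, hmmLaw_mix_inl, hmmLaw_mix_swap]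

end MarkovChannel

theorem BrokenChainDegraded.mix {S₁ S₂ X Y : Type*} [Fintype S₁] [Fintype S₂]
    {W : SeqChannel X Y} {c₁ : MarkovChannel S₁ X Y} {c₂ : MarkovChannel S₂ X Y} {μ ν : ℝ}
    (h₁ : BrokenChainDegraded W c₁.law) (h₂ : BrokenChainDegraded W c₂.law)
    (hμ0 : 0 ≤ μ) (hμ1 : μ ≤ 1) (hν0 : 0 ≤ ν) (hν1 : ν ≤ 1) :
    BrokenChainDegraded W (c₁.mix c₂ μ ν).law := by
  set M := c₁.mix c₂ μ ν
  have hrestart (n : ℕ) : IsBrokenChainAt W (hmmLaw M.P M.f (Sum.elim c₁.π 0)) n ∧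
      IsBrokenChainAt W (hmmLaw M.P M.f (Sum.elim 0 c₂.π)) n := by
    induction n using Nat.strong_induction_on with
    | _ n ih =>
      constructor
      · rw [MarkovChannel.hmmLaw_mix_inl]
        exact isBrokenChainAt_switch hμ0 hμ1 h₁ fun m hm => (ih m hm).2
      · rw [MarkovChannel.hmmLaw_mix_inr]
        exact isBrokenChainAt_switch hν0 hν1 h₂ fun m hm => (ih m hm).1
  set α := ν / (μ + ν)
  have hα0 : 0 ≤ α := div_nonneg hν0 (add_nonneg hμ0 hν0)
  have hα1 : α ≤ 1 := div_le_one_of_le₀ (le_add_of_nonneg_left hμ0) (add_nonneg hμ0 hν0)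
  intro n
  refine (IsBrokenChainAt.sum (w := ![α, 1 - α])
    (V := ![hmmLaw M.P M.f (Sum.elim c₁.π 0), hmmLaw M.P M.f (Sum.elim 0 c₂.π)])
    ?_ ?_ ?_).congr fun xs ys _ _ => ?_
  · simp [Fin.forall_fin_two, hα0, hα1]
  · simp
  · simp [Fin.forall_fin_two, hrestart n]
  · simp only [Fin.sum_univ_two, Matrix.cons_val_zero, Matrix.cons_val_one]
    exact (hmmLaw_sumElim M.P M.f (add_sub_cancel α 1) c₁.π c₂.π xs ys).symm

theorem mix_mem_degraded_family_general {S S' X Y : Type*} [Fintype S] [Fintype S']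
    (c : MarkovChannel S X Y) (cstar : MarkovChannel S' X Y)
    (μ₁₂ μ₂₁ : ℝ) (hμ₁₂ : 0 < μ₁₂) (hμ₁₂' : μ₁₂ < 1) (hμ₂₁ : 0 < μ₂₁) (hμ₂₁' : μ₂₁ < 1)
    (hdeg : BrokenChainDegraded c.law cstar.law) :
    BrokenChainDegraded c.law (c.mix cstar μ₁₂ μ₂₁).law :=
  (brokenChainDegraded_self rfl).mix hdeg hμ₁₂.le hμ₁₂'.le hμ₂₁.le hμ₂₁'.le

/-- Lemma 2: if `c* ∈ D_c` and `c'` is obtained by mixing `c` with `c*`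
with parameters `μ₁₂, μ₂₁ ∈ (0,1)`, then `c' ∈ D_c`. -/
theorem mix_mem_degraded_family {S S' X Y : Type*} [Fintype S] [Fintype S']
    [Fintype X] [Fintype Y]
    (c : MarkovChannel S X Y) (cstar : MarkovChannel S' X Y)
    (hP0 : ∀ s t, 0 ≤ c.P s t) (hP1 : ∀ s, ∑ t, c.P s t = 1)
    (hπ0 : ∀ s, 0 ≤ c.π s) (hπ1 : ∑ s, c.π s = 1)
    (hπstat : ∀ t, ∑ s, c.π s * c.P s t = c.π t)
    (hf0 : ∀ s x y, 0 ≤ c.f s x y) (hf1 : ∀ s x, ∑ y, c.f s x y = 1)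
    (hP0' : ∀ s t, 0 ≤ cstar.P s t) (hP1' : ∀ s, ∑ t, cstar.P s t = 1)
    (hπ0' : ∀ s, 0 ≤ cstar.π s) (hπ1' : ∑ s, cstar.π s = 1)
    (hπstat' : ∀ t, ∑ s, cstar.π s * cstar.P s t = cstar.π t)
    (hf0' : ∀ s x y, 0 ≤ cstar.f s x y) (hf1' : ∀ s x, ∑ y, cstar.f s x y = 1)
    (μ₁₂ μ₂₁ : ℝ) (hμ₁₂ : 0 < μ₁₂) (hμ₁₂' : μ₁₂ < 1) (hμ₂₁ : 0 < μ₂₁) (hμ₂₁' : μ₂₁ < 1)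
    (hdeg : BrokenChainDegraded c.law cstar.law) :
    BrokenChainDegraded c.law (c.mix cstar μ₁₂ μ₂₁).law :=
  mix_mem_degraded_family_general c cstar μ₁₂ μ₂₁ hμ₁₂ hμ₁₂' hμ₂₁ hμ₂₁' hdeg
end
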